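/- Let (F_1, F_2) be a Nash equilibrium of the single-item all-pay auction with parameters (B_1, B_2, v_1, v_2) with B_1 ≠ B_2 and inf Supp(F_1) = inf Supp(F_2) = 0; let s be the player with the larger budget and w the other player. If v_s = L, then: player s's expected equilibrium utility equals 0 and player w's expected equilibrium utility equals v_w − L; moreover F_s({0}) = (v_w − L)/v_w, F_s({L}) = 0, F_w({0}) = 0, and F_w({L}) = 0. -/

import Mathlib

open MeasureTheory Set

noncomputable section

/-- `L = min {B₁, B₂, v₁, v₂}` for the single-item auction. -/
def Lval (B v : Fin 2 → ℝ) : ℝ := min (min (B 0) (B 1)) (min (v 0) (v 1))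

/-- Probability that player `i` wins the single item when bidding `xi` while the
opponent bids `xo`: the strictly higher bid wins; on a tie at
`min {B₁, B₂, v₁, v₂}` the player with the strictly larger `min {Bᵢ, vᵢ}` wins,
and all other ties are resolved by a fair coin. -/
def winProb (B v : Fin 2 → ℝ) (i : Fin 2) (xi xo : ℝ) : ℝ :=
  if xo < xi then 1
  else if xi < xo then 0
  else if xi = Lval B v ∧ min (B (1 - i)) (v (1 - i)) < min (B i) (v i) then 1
  else if xi = Lval B v ∧ min (B i) (v i) < min (B (1 - i)) (v (1 - i)) then 0
  else 1 / 2

/-- Expected utility of player `i` from the pure bids `xi` (own) and `xo` (opponent):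
he pays his bid in any case and receives `v i` with his winning probability. -/
def payoff (B v : Fin 2 → ℝ) (i : Fin 2) (xi xo : ℝ) : ℝ :=
  winProb B v i xi xo * v i - xi

/-- A mixed strategy of a player with budget `Bi`: a probability measure on `[0, Bi]`. -/
def IsStrategy (Bi : ℝ) (μ : Measure ℝ) : Prop :=
  IsProbabilityMeasure μ ∧ μ (Icc 0 Bi) = 1

/-- Expected utility of player `i` when he plays `μ` and the opponent plays `ν`. -/
def expUtil (B v : Fin 2 → ℝ) (i : Fin 2) (μ ν : Measure ℝ) : ℝ :=
  ∫ xi, (∫ xo, payoff B v i xi xo ∂ν) ∂μ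

/-- `(F 0, F 1)` is a (mixed) Nash equilibrium of the single-item all-pay auction. -/
def IsNash (B v : Fin 2 → ℝ) (F : Fin 2 → Measure ℝ) : Prop :=
  (∀ i, IsStrategy (B i) (F i)) ∧
  ∀ i, ∀ μ, IsStrategy (B i) μ →
    expUtil B v i μ (F (1 - i)) ≤ expUtil B v i (F i) (F (1 - i))

/-- The (topological) support of a mixed strategy. -/
def supp (μ : Measure ℝ) : Set ℝ := {x | ∀ U ∈ nhds x, μ U ≠ 0}

/-!
In equilibrium the payoff of every pure bid is at most the player's equilibrium utility `U`,
with equality for almost every bid he makes. As `0` lies in both supports and an opponent's atom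
at `0` is beaten by any small positive bid, `U_i = v_i F_{3-i}({0})`.

An atom of `w` at `0` would give `s` a positive utility, so `s` would never bid above
`v_s - U_s < L` and `w` could profitably outbid him; hence `F_w({0}) = 0` and `U_s = 0`.
An atom of `s` at `L` has to win surely, which forces `w` below `L`; then bidding `L` beats `w`'s
bids just below `L`. An atom of `w` at `L` makes `s`'s bids just below `L` unprofitable, and the
resulting gap lets `w` win surely below `L`. Finally `w`'s bids come arbitrarily close to `L`
(a gap there would let `s` win surely at a profit), so `U_w = v_w - L`, and `F_s({0}) = U_w / v_w`.
-/

open Filter Topology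

lemma le_of_forall_mem_Ioo_le_add {a b ε : ℝ} (hε : 0 < ε) (h : ∀ δ ∈ Ioo 0 ε, a ≤ b + δ) :
    a ≤ b := by
  refine le_of_forall_pos_le_add fun δ hδ => (h (min δ (ε / 2)) ⟨by positivity, ?_⟩).trans ?_
  · linarith [min_le_right δ (ε / 2)]
  · linarith [min_le_left δ (ε / 2)]

lemma measureReal_Iic (ν : Measure ℝ) [IsFiniteMeasure ν] (x : ℝ) :
    ν.real (Iic x) = ν.real (Iio x) + ν.real {x} := by
  rw [← Iio_union_right, measureReal_union (by simp) (measurableSet_singleton x)]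

lemma measureReal_Iio_eq_one {μ : Measure ℝ} [IsProbabilityMeasure μ] {a : ℝ}
    (h : μ (Ici a) = 0) : μ.real (Iio a) = 1 := by
  rw [measureReal_def, (prob_compl_eq_zero_iff measurableSet_Iio).1 (by rwa [compl_Iio]),
    ENNReal.toReal_one]

lemma Lval_le_B (B v : Fin 2 → ℝ) (i : Fin 2) : Lval B v ≤ B i := by
  fin_cases i <;> simp [Lval]

lemma Lval_le_v (B v : Fin 2 → ℝ) (i : Fin 2) : Lval B v ≤ v i := by
  fin_cases i <;> simp [Lval]

lemma min_le_min_of_v_eq_Lval {B v : Fin 2 → ℝ} {s : Fin 2} (hvs : v s = Lval B v) (j : Fin 2) :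
    min (B s) (v s) ≤ min (B j) (v j) :=
  (min_le_right _ _).trans (hvs ▸ le_min (Lval_le_B B v j) (Lval_le_v B v j))

section WinProb

variable (B v : Fin 2 → ℝ) (i : Fin 2)

lemma winProb_nonneg (x xo : ℝ) : 0 ≤ winProb B v i x xo := by
  unfold winProb; split_ifs <;> norm_num

lemma winProb_le_one (x xo : ℝ) : winProb B v i x xo ≤ 1 := by
  unfold winProb; split_ifs <;> norm_num

lemma winProb_self_of_ne {x : ℝ} (hx : x ≠ Lval B v) : winProb B v i x x = 1 / 2 := by
  simp [winProb, hx]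

lemma winProb_self_le_half (h : min (B i) (v i) ≤ min (B (1 - i)) (v (1 - i))) (x : ℝ) :
    winProb B v i x x ≤ 1 / 2 := by
  simp only [winProb, lt_irrefl, if_false]
  split_ifs with h1 <;> [linarith [h1.2]; norm_num; norm_num]

lemma half_le_winProb_self (h : min (B (1 - i)) (v (1 - i)) ≤ min (B i) (v i)) (x : ℝ) :
    1 / 2 ≤ winProb B v i x x := by
  simp only [winProb, lt_irrefl, if_false]
  split_ifs with h1 h2 <;> [norm_num; linarith [h2.2]; norm_num]

/-- `winProb B v i x x` is the probability that player `i` wins a tie at `x`. -/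
lemma winProb_eq_indicator (x xo : ℝ) :
    winProb B v i x xo =
      (Iio x).indicator 1 xo + winProb B v i x x * ({x} : Set ℝ).indicator 1 xo := by
  rcases lt_trichotomy xo x with h | rfl | h
  · simp [winProb, h, h.ne]
  · rw [indicator_of_notMem (s := Iio xo) (by simp), indicator_of_mem (mem_singleton xo)]
    simp
  · simp [winProb, h, h.not_gt, h.ne']

lemma measurable_payoff : Measurable fun p : ℝ × ℝ => payoff B v i p.1 p.2 := by
  have hL : MeasurableSet {p : ℝ × ℝ | p.1 = Lval B v} :=
    measurableSet_eq_fun measurable_fst measurable_const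
  refine Measurable.sub (Measurable.mul_const ?_ _) measurable_fst
  refine Measurable.ite (measurableSet_lt measurable_snd measurable_fst) measurable_const ?_
  refine Measurable.ite (measurableSet_lt measurable_fst measurable_snd) measurable_const ?_
  exact Measurable.ite (hL.inter (MeasurableSet.const _)) measurable_const
    (Measurable.ite (hL.inter (MeasurableSet.const _)) measurable_const measurable_const)

end WinProb

def bidUtil (B v : Fin 2 → ℝ) (i : Fin 2) (ν : Measure ℝ) (x : ℝ) : ℝ :=
  ∫ xo, payoff B v i x xo ∂ν

lemma measurable_bidUtil (B v : Fin 2 → ℝ) (i : Fin 2) (ν : Measure ℝ) [SFinite ν] :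
    Measurable (bidUtil B v i ν) :=
  (measurable_payoff B v i).stronglyMeasurable.integral_prod_right'.measurable

section BidUtil

variable (B v : Fin 2 → ℝ) (i : Fin 2) (ν : Measure ℝ) [IsProbabilityMeasure ν]


lemma bidUtil_eq (x : ℝ) :
    bidUtil B v i ν x = v i * (ν.real (Iio x) + winProb B v i x x * ν.real {x}) - x := by
  have h1 : Integrable ((Iio x).indicator (1 : ℝ → ℝ)) ν :=
    (integrable_const 1).indicator measurableSet_Iio
  have h2 : Integrable (({x} : Set ℝ).indicator (1 : ℝ → ℝ)) ν :=
    (integrable_const 1).indicator (measurableSet_singleton x)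
  have hpay : ∀ xo, payoff B v i x xo = ((Iio x).indicator 1 xo
      + winProb B v i x x * ({x} : Set ℝ).indicator 1 xo) * v i - x := fun xo => by
    rw [payoff, winProb_eq_indicator]
  have hwin : Integrable (fun xo => ((Iio x).indicator 1 xo
      + winProb B v i x x * ({x} : Set ℝ).indicator 1 xo) * v i) ν :=
    (h1.add (h2.const_mul _)).mul_const _
  simp_rw [bidUtil, hpay]
  rw [integral_sub hwin (integrable_const x), integral_mul_const,
    integral_add h1 (h2.const_mul _), integral_const_mul, integral_indicator_one measurableSet_Iio,
    integral_indicator_one (measurableSet_singleton x), integral_const, probReal_univ, one_smul,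
    mul_comm]

variable {v i}

lemma bidUtil_le (hv : 0 ≤ v i) (x : ℝ) : bidUtil B v i ν x ≤ v i * ν.real (Iic x) - x := by
  rw [bidUtil_eq, measureReal_Iic]
  have := mul_le_of_le_one_left (measureReal_nonneg (μ := ν) (s := {x}))
    (winProb_le_one B v i x x)
  gcongr

lemma le_bidUtil (hv : 0 ≤ v i) (x : ℝ) : v i * ν.real (Iio x) - x ≤ bidUtil B v i ν x := by
  rw [bidUtil_eq]
  have := mul_nonneg (winProb_nonneg B v i x x) (measureReal_nonneg (μ := ν) (s := {x}))
  gcongr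
  linarith

end BidUtil


section Strategy

variable {b : ℝ} {μ : Measure ℝ}

lemma IsStrategy.ae_mem (h : IsStrategy b μ) : ∀ᵐ x ∂μ, x ∈ Icc 0 b :=
  have := h.1
  ae_iff.2 ((prob_compl_eq_zero_iff measurableSet_Icc).2 h.2)

lemma IsStrategy.measure_Iio_zero (h : IsStrategy b μ) : μ (Iio 0) = 0 :=
  measure_mono_null (fun x (hx : x < 0) (hmem : x ∈ Icc 0 b) => hx.not_ge hmem.1)
    (ae_iff.1 h.ae_mem)

lemma IsStrategy.nonneg_of_measure_Ioi (h : IsStrategy b μ) {K : ℝ} (hK : μ (Ioi K) = 0) :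
    0 ≤ K := by
  by_contra! hK0
  have := h.1
  simpa [h.2] using measure_mono_null (fun x (hx : x ∈ Icc 0 b) => hK0.trans_le hx.1) hK

lemma isStrategy_dirac {x : ℝ} (hx : x ∈ Icc 0 b) : IsStrategy b (Measure.dirac x) :=
  ⟨inferInstance, Measure.dirac_apply_of_mem hx⟩

lemma supp_eq_support : supp μ = μ.support := by
  ext x
  simp [supp, Measure.mem_support_iff_forall, pos_iff_ne_zero]

lemma IsStrategy.sInf_supp_mem (h : IsStrategy b μ) : sInf (supp μ) ∈ supp μ := by
  have := h.1
  rw [supp_eq_support]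
  refine Measure.isClosed_support.csInf_mem (Measure.nonempty_support (NeZero.ne μ)) ⟨0, ?_⟩
  exact fun x hx => (Measure.support_subset_of_isClosed isClosed_Icc h.ae_mem hx).1

lemma integrable_bidUtil {B v : Fin 2 → ℝ} {i : Fin 2} (ν : Measure ℝ) [IsProbabilityMeasure ν]
    (hv : 0 ≤ v i) (hμ : IsStrategy b μ) : Integrable (bidUtil B v i ν) μ := by
  have := hμ.1
  refine Integrable.mono' (integrable_const (v i + b))
    (measurable_bidUtil B v i ν).aestronglyMeasurable ?_
  filter_upwards [hμ.ae_mem] with x hx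
  have := bidUtil_le B ν hv x
  have := le_bidUtil B ν hv x
  have : ν.real (Iic x) ≤ 1 := measureReal_le_one
  rw [Real.norm_eq_abs, abs_le]
  constructor <;> nlinarith [hx.1, hx.2, measureReal_nonneg (μ := ν) (s := Iio x)]

end Strategy

def IsBestResponse (B v : Fin 2 → ℝ) (i : Fin 2) (μ ν : Measure ℝ) : Prop :=
  IsStrategy (B i) μ ∧ ∀ μ', IsStrategy (B i) μ' → expUtil B v i μ' ν ≤ expUtil B v i μ ν

lemma IsNash.isBestResponse {B v : Fin 2 → ℝ} {F : Fin 2 → Measure ℝ} (hN : IsNash B v F)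
    (i : Fin 2) : IsBestResponse B v i (F i) (F (1 - i)) :=
  ⟨hN.1 i, hN.2 i⟩

namespace IsBestResponse

variable {B v : Fin 2 → ℝ} {i : Fin 2} {μ ν : Measure ℝ}

lemma bidUtil_le_expUtil (h : IsBestResponse B v i μ ν) {x : ℝ} (hx : x ∈ Icc 0 (B i)) :
    bidUtil B v i ν x ≤ expUtil B v i μ ν := by
  simpa [expUtil, bidUtil] using h.2 _ (isStrategy_dirac hx)

variable [IsProbabilityMeasure ν]

lemma ae_bidUtil_eq (h : IsBestResponse B v i μ ν) (hv : 0 ≤ v i) :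
    ∀ᵐ x ∂μ, x ∈ Icc 0 (B i) ∧ bidUtil B v i ν x = expUtil B v i μ ν := by
  have := h.1.1
  have hle : bidUtil B v i ν ≤ᵐ[μ] fun _ => expUtil B v i μ ν :=
    h.1.ae_mem.mono fun x hx => h.bidUtil_le_expUtil hx
  have heq := (integral_eq_iff_of_ae_le (integrable_bidUtil ν hv h.1) (integrable_const _)
    hle).1 (by simp [expUtil, bidUtil])
  filter_upwards [h.1.ae_mem, heq] with x hx hxeq using ⟨hx, hxeq⟩

lemma exists_bidUtil_eq (h : IsBestResponse B v i μ ν) (hv : 0 ≤ v i) {S : Set ℝ}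
    (hS : μ S ≠ 0) : ∃ x ∈ S, x ∈ Icc 0 (B i) ∧ bidUtil B v i ν x = expUtil B v i μ ν :=
  Measure.exists_mem_of_measure_ne_zero_of_ae hS (ae_restrict_of_ae (h.ae_bidUtil_eq hv))

lemma measure_eq_zero_of_bidUtil_lt (h : IsBestResponse B v i μ ν) (hv : 0 ≤ v i) {S : Set ℝ}
    (hS : ∀ x ∈ S, x ∈ Icc 0 (B i) → bidUtil B v i ν x < expUtil B v i μ ν) : μ S = 0 := by
  by_contra hS0
  obtain ⟨x, hxS, hx, hxu⟩ := h.exists_bidUtil_eq hv hS0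
  exact (hS x hxS hx).ne hxu

-- A bid `x` earns at most `v i - x`.
lemma measure_Ioi_sub_expUtil_eq_zero (h : IsBestResponse B v i μ ν) (hv : 0 ≤ v i) :
    μ (Ioi (v i - expUtil B v i μ ν)) = 0 :=
  h.measure_eq_zero_of_bidUtil_lt hv fun x hx _ => by
    have := bidUtil_le B ν hv x
    have : ν.real (Iic x) ≤ 1 := measureReal_le_one
    nlinarith [mem_Ioi.1 hx]

lemma sub_le_expUtil (h : IsBestResponse B v i μ ν) (hv : 0 ≤ v i) {K x : ℝ}
    (hK : ν (Ioi K) = 0) (hKx : K < x) (hx : x ∈ Icc 0 (B i)) : v i - x ≤ expUtil B v i μ ν := by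
  have hν : ν.real (Iio x) = 1 :=
    measureReal_Iio_eq_one (measure_mono_null (Ici_subset_Ioi.2 hKx) hK)
  simpa [hν] using (le_bidUtil B ν hv x).trans (h.bidUtil_le_expUtil hx)

end IsBestResponse


namespace IsBestResponse

variable {B v : Fin 2 → ℝ} {i : Fin 2} {μ ν : Measure ℝ} [IsProbabilityMeasure ν]

open ProbabilityTheory in
lemma expUtil_le_mul_measureReal_zero (h : IsBestResponse B v i μ ν) (hv : 0 ≤ v i)
    (h0 : 0 ∈ supp μ) (hν : ν (Iio 0) = 0) : expUtil B v i μ ν ≤ v i * ν.real {0} := by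
  have hcdf : Tendsto (cdf ν) (𝓝[>] 0) (𝓝 (ν.real {0})) := by
    have := (((cdf ν).right_continuous 0).mono Ioi_subset_Ici_self).tendsto
    rwa [cdf_eq_real, measureReal_Iic, (measureReal_eq_zero_iff).2 hν, zero_add] at this
  refine ge_of_tendsto (hcdf.const_mul (v i)) (eventually_nhdsWithin_of_forall fun δ hδ => ?_)
  obtain ⟨x, hxδ, hx, hxu⟩ :=
    h.exists_bidUtil_eq hv (h0 _ (Ioo_mem_nhds (neg_neg_of_pos hδ) hδ))
  rw [← hxu, cdf_eq_real]
  calc bidUtil B v i ν x ≤ v i * ν.real (Iic x) - x := bidUtil_le B ν hv x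
    _ ≤ v i * ν.real (Iic δ) := by
      have : ν.real (Iic x) ≤ ν.real (Iic δ) := measureReal_mono (Iic_subset_Iic.2 hxδ.2.le)
      nlinarith [hx.1]

lemma mul_measureReal_zero_le_expUtil (h : IsBestResponse B v i μ ν) (hv : 0 ≤ v i)
    (hB : 0 < B i) : v i * ν.real {0} ≤ expUtil B v i μ ν := by
  refine le_of_forall_mem_Ioo_le_add hB fun δ hδ => ?_
  calc v i * ν.real {0} ≤ v i * ν.real (Iio δ) :=
        mul_le_mul_of_nonneg_left (measureReal_mono (singleton_subset_iff.2 hδ.1)) hv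
    _ ≤ bidUtil B v i ν δ + δ := by linarith [le_bidUtil B ν hv δ]
    _ ≤ expUtil B v i μ ν + δ := by gcongr; exact h.bidUtil_le_expUtil ⟨hδ.1.le, hδ.2.le⟩

lemma expUtil_eq_mul_measureReal_zero (h : IsBestResponse B v i μ ν) (hv : 0 ≤ v i)
    (hB : 0 < B i) (h0 : 0 ∈ supp μ) (hν : ν (Iio 0) = 0) :
    expUtil B v i μ ν = v i * ν.real {0} :=
  (h.expUtil_le_mul_measureReal_zero hv h0 hν).antisymm (h.mul_measureReal_zero_le_expUtil hv hB)

end IsBestResponse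


/-! Below, `s` is the ("strong") player with `v s = L`, `1 - s` the weak one, and `μs`, `μw` are
their strategies. -/

section StrongValueEqLval

variable {B v : Fin 2 → ℝ} {s : Fin 2} {μs μw : Measure ℝ}

lemma weak_measure_zero_eq_zero (hv : ∀ i, 0 < v i) (hvs : v s = Lval B v)
    (hs : IsBestResponse B v s μs μw) (hw : IsBestResponse B v (1 - s) μw μs) :
    μw {0} = 0 := by
  have := hs.1.1
  have := hw.1.1
  by_contra hb
  have hL : 0 < Lval B v := hvs ▸ hv s
  have hLw := Lval_le_B B v (1 - s)
  obtain ⟨_, rfl, -, hw0⟩ := hw.exists_bidUtil_eq (hv _).le hb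
  rw [bidUtil_eq, (measureReal_eq_zero_iff).2 hs.1.measure_Iio_zero,
    winProb_self_of_ne B v _ hL.ne] at hw0
  -- bidding slightly above `0` beats the tie that `w`'s atom at `0` wins only half the time
  have hμs0 : μs.real {0} = 0 := by
    nlinarith [hw.mul_measureReal_zero_le_expUtil (hv _).le (hL.trans_le hLw), hv (1 - s),
      measureReal_nonneg (μ := μs) (s := {0})]
  have huw : expUtil B v (1 - s) μw μs = 0 := by rw [← hw0, hμs0]; ring
  have hus : 0 < expUtil B v s μs μw :=
    (mul_pos (hv s) (ENNReal.toReal_pos hb (measure_ne_top _ _))).trans_le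
      (hs.mul_measureReal_zero_le_expUtil (hv s).le (hL.trans_le (Lval_le_B B v s)))
  -- so `s` never bids above `K < L`, and `w` gains by outbidding `K`
  set K := v s - expUtil B v s μs μw
  have hK := hs.measure_Ioi_sub_expUtil_eq_zero (hv s).le
  have hK0 := hs.1.nonneg_of_measure_Ioi hK
  have := hw.sub_le_expUtil (hv _).le hK (x := (K + Lval B v) / 2) (by linarith)
    ⟨by linarith, by linarith⟩
  linarith [Lval_le_v B v (1 - s)]

lemma strong_expUtil_eq_zero (hv : ∀ i, 0 < v i) (hvs : v s = Lval B v)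
    (hs : IsBestResponse B v s μs μw) (hw : IsBestResponse B v (1 - s) μw μs)
    (h0 : 0 ∈ supp μs) : expUtil B v s μs μw = 0 := by
  have := hw.1.1
  rw [hs.expUtil_eq_mul_measureReal_zero (hv s).le ((hvs ▸ hv s).trans_le (Lval_le_B B v s)) h0
    hw.1.measure_Iio_zero, measureReal_def, weak_measure_zero_eq_zero hv hvs hs hw,
    ENNReal.toReal_zero, mul_zero]

/-- If `w` never bids `L` or more, `s` (who earns nothing) would profit from any gap
of `w`'s bids just below `L`; so `w`'s bids come arbitrarily close to `L`. -/
lemma weak_expUtil_le (hv : ∀ i, 0 < v i) (hvs : v s = Lval B v)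
    (hs : IsBestResponse B v s μs μw) (hw : IsBestResponse B v (1 - s) μw μs)
    (hus : expUtil B v s μs μw = 0) (hw_top : μw (Ici (Lval B v)) = 0) :
    expUtil B v (1 - s) μw μs ≤ v (1 - s) * μs.real (Iio (Lval B v)) - Lval B v := by
  have := hs.1.1
  have := hw.1.1
  set L := Lval B v
  have hL : 0 < L := hvs ▸ hv s
  refine le_of_forall_mem_Ioo_le_add hL fun δ hδ => ?_
  have hgap : μw (Ioo (L - δ) L) ≠ 0 := by
    intro h0
    have htop : μw (Ioi (L - δ)) = 0 := by
      rw [← Ioo_union_Ici_eq_Ioi (by linarith [hδ.1])]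
      exact measure_union_null h0 hw_top
    have := hs.sub_le_expUtil (hv s).le htop (x := L - δ / 2) (by linarith [hδ.1])
      ⟨by linarith [hδ.2], by linarith [hδ.1, Lval_le_B B v s]⟩
    linarith [hδ.1]
  obtain ⟨x, hxδ, -, hxu⟩ := hw.exists_bidUtil_eq (hv _).le hgap
  rw [← hxu]
  have := bidUtil_le B μs (hv (1 - s)).le x
  have : μs.real (Iic x) ≤ μs.real (Iio L) := measureReal_mono (Iic_subset_Iio.2 hxδ.2)
  nlinarith [hxδ.1, hv (1 - s)]

lemma strong_measure_Lval_eq_zero (hv : ∀ i, 0 < v i) (hvs : v s = Lval B v)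
    (hs : IsBestResponse B v s μs μw) (hw : IsBestResponse B v (1 - s) μw μs)
    (hus : expUtil B v s μs μw = 0) : μs {Lval B v} = 0 := by
  have := hs.1.1
  have := hw.1.1
  set L := Lval B v
  have hL : 0 < L := hvs ▸ hv s
  by_contra ha
  obtain ⟨_, rfl, -, hsL⟩ := hs.exists_bidUtil_eq (hv s).le ha
  rw [hus, bidUtil_eq, hvs] at hsL
  -- `s` breaks even at `L` only if he wins for sure, which a tie at `L` does not give him
  have ht := winProb_self_le_half B v s (min_le_min_of_v_eq_Lval hvs _) L
  have hpq : μw.real (Iio L) + μw.real {L} ≤ 1 := measureReal_Iic μw L ▸ measureReal_le_one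
  have hwin : μw.real (Iio L) + winProb B v s L L * μw.real {L} = 1 :=
    mul_left_cancel₀ hL.ne' (by linarith)
  have hp : μw.real (Iio L) = 1 := by
    nlinarith [measureReal_nonneg (μ := μw) (s := {L}), measureReal_nonneg (μ := μw) (s := Iio L)]
  have hw_top : μw (Ici L) = 0 := by
    rw [← measureReal_eq_zero_iff, ← compl_Iio, measureReal_compl measurableSet_Iio, hp,
      probReal_univ, sub_self]
  have h1 : expUtil B v (1 - s) μw μs ≤ v (1 - s) * μs.real (Iio L) - L :=
    weak_expUtil_le hv hvs hs hw hus hw_top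
  have h2 := hw.bidUtil_le_expUtil ⟨hL.le, Lval_le_B B v (1 - s)⟩
  rw [bidUtil_eq] at h2
  have ht' := half_le_winProb_self B v (1 - s)
    (by rw [sub_sub_cancel]; exact min_le_min_of_v_eq_Lval hvs _) L
  have ha' : 0 < μs.real {L} := ENNReal.toReal_pos ha (measure_ne_top _ _)
  nlinarith [mul_pos (hv (1 - s)) (mul_pos (by linarith : 0 < winProb B v (1 - s) L L) ha')]

lemma strong_measure_Ici_Lval_eq_zero [IsProbabilityMeasure μw] (hv : ∀ i, 0 < v i)
    (hvs : v s = Lval B v) (hs : IsBestResponse B v s μs μw) (hus : expUtil B v s μs μw = 0)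
    (hsL : μs {Lval B v} = 0) : μs (Ici (Lval B v)) = 0 := by
  rw [← Ioi_insert, insert_eq]
  exact measure_union_null hsL (by simpa [hus, hvs] using hs.measure_Ioi_sub_expUtil_eq_zero (hv s).le)

lemma weak_measure_Lval_eq_zero (hv : ∀ i, 0 < v i) (hvs : v s = Lval B v)
    (hs : IsBestResponse B v s μs μw) (hw : IsBestResponse B v (1 - s) μw μs)
    (hus : expUtil B v s μs μw = 0) (hsL : μs {Lval B v} = 0) : μw {Lval B v} = 0 := by
  have := hs.1.1
  have := hw.1.1
  set L := Lval B v
  have hL : 0 < L := hvs ▸ hv s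
  by_contra hc
  have hc0 : 0 < μw.real {L} := ENNReal.toReal_pos hc (measure_ne_top _ _)
  have hc1 : μw.real {L} ≤ 1 := measureReal_le_one
  have hs_top : μs (Ici L) = 0 := strong_measure_Ici_Lval_eq_zero hv hvs hs hus hsL
  obtain ⟨_, rfl, -, hwL⟩ := hw.exists_bidUtil_eq (hv _).le hc
  rw [bidUtil_eq, measureReal_Iio_eq_one hs_top, measureReal_def, hsL, ENNReal.toReal_zero,
    mul_zero, add_zero, mul_one] at hwL
  -- against `w`'s atom of mass `c` at `L`, every bid of `s` in `(L (1 - c), L)` loses money,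
  -- so `w` could win surely by bidding just above `L (1 - c)`
  have hgap : μs (Ioo (L * (1 - μw.real {L})) L) = 0 :=
    hs.measure_eq_zero_of_bidUtil_lt (hv s).le fun x hx _ => by
      have h1 := bidUtil_le B μw (hv s).le x
      have h2 : μw.real (Iic x) + μw.real {L} ≤ 1 := by
        rw [← measureReal_union (disjoint_singleton_right.2 (show L ∉ Iic x from not_le.2 hx.2))
          (measurableSet_singleton _)]
        exact measureReal_le_one
      rw [hus]
      rw [hvs] at h1
      nlinarith [hx.1]
  have hs_top' : μs (Ioi (L * (1 - μw.real {L}))) = 0 := by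
    rw [← Ioo_union_Ici_eq_Ioi (show L * (1 - μw.real {L}) < L by nlinarith)]
    exact measure_union_null hgap hs_top
  have := hw.sub_le_expUtil (hv _).le hs_top' (x := L * (1 - μw.real {L} / 2)) (by nlinarith)
    ⟨by nlinarith, by nlinarith [Lval_le_B B v (1 - s)]⟩
  nlinarith

lemma weak_expUtil_eq (hv : ∀ i, 0 < v i) (hvs : v s = Lval B v)
    (hs : IsBestResponse B v s μs μw) (hw : IsBestResponse B v (1 - s) μw μs)
    (hus : expUtil B v s μs μw = 0) (hsL : μs {Lval B v} = 0) (hwL : μw {Lval B v} = 0) :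
    expUtil B v (1 - s) μw μs = v (1 - s) - Lval B v := by
  have := hs.1.1
  have := hw.1.1
  set L := Lval B v
  have hL : 0 < L := hvs ▸ hv s
  have hsIio : μs.real (Iio L) = 1 :=
    measureReal_Iio_eq_one (strong_measure_Ici_Lval_eq_zero hv hvs hs hus hsL)
  have hge : v (1 - s) - L ≤ expUtil B v (1 - s) μw μs := by
    simpa [hsIio] using (le_bidUtil B μs (hv _).le L).trans
      (hw.bidUtil_le_expUtil ⟨hL.le, Lval_le_B B v (1 - s)⟩)
  have hw_top : μw (Ici L) = 0 := by
    rw [← Ioi_insert, insert_eq]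
    exact measure_union_null hwL (measure_mono_null (Ioi_subset_Ioi (by linarith))
      (hw.measure_Ioi_sub_expUtil_eq_zero (hv _).le))
  have : expUtil B v (1 - s) μw μs ≤ v (1 - s) * μs.real (Iio L) - L :=
    weak_expUtil_le hv hvs hs hw hus hw_top
  rw [hsIio] at this
  linarith

end StrongValueEqLval

theorem endpoint_masses_case2_general (B v : Fin 2 → ℝ)
    (hv : ∀ i, 0 < v i) (F : Fin 2 → Measure ℝ) (hN : IsNash B v F)
    (s : Fin 2)
    (h0 : ∀ i, sInf (supp (F i)) = 0)
    (hvs : v s = Lval B v) :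
    expUtil B v s (F s) (F (1 - s)) = 0 ∧
    expUtil B v (1 - s) (F (1 - s)) (F s) = v (1 - s) - Lval B v ∧
    (F s {0}).toReal = (v (1 - s) - Lval B v) / v (1 - s) ∧
    F s {Lval B v} = 0 ∧
    F (1 - s) {0} = 0 ∧
    F (1 - s) {Lval B v} = 0 := by
  have hs := hN.isBestResponse s
  have hw : IsBestResponse B v (1 - s) (F (1 - s)) (F s) := by
    simpa only [sub_sub_cancel] using hN.isBestResponse (1 - s)
  have := hs.1.1
  have hsupp (i : Fin 2) : (0 : ℝ) ∈ supp (F i) := h0 i ▸ (hN.1 i).sInf_supp_mem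
  have hus := strong_expUtil_eq_zero hv hvs hs hw (hsupp s)
  have hsL := strong_measure_Lval_eq_zero hv hvs hs hw hus
  have hwL := weak_measure_Lval_eq_zero hv hvs hs hw hus hsL
  have huw := weak_expUtil_eq hv hvs hs hw hus hsL hwL
  refine ⟨hus, huw, ?_, hsL, weak_measure_zero_eq_zero hv hvs hs hw, hwL⟩
  rw [eq_div_iff (hv _).ne', ← huw, hw.expUtil_eq_mul_measureReal_zero (hv _).le
    ((hvs ▸ hv s).trans_le (Lval_le_B B v _)) (hsupp _) hs.1.measure_Iio_zero, mul_comm]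
  rfl

/-- Endpoint behaviour in a Nash equilibrium with asymmetric budgets in which both
supports have infimum `0`, for the case `v_s = L` (where `s` is the player with the
larger budget and `w = 1 - s` the other player): `s`'s expected utility is `0`,
`w`'s expected utility is `v_w - L`, `s` bids `0` with probability `(v_w - L)/v_w`
and puts no mass at `L`, while `w` puts no mass at either `0` or `L`. -/
theorem endpoint_masses_case2 (B v : Fin 2 → ℝ) (hB : ∀ i, 0 ≤ B i)
    (hv : ∀ i, 0 < v i) (F : Fin 2 → Measure ℝ) (hN : IsNash B v F)
    (s : Fin 2) (hs : B (1 - s) < B s)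
    (h0 : ∀ i, sInf (supp (F i)) = 0)
    (hvs : v s = Lval B v) :
    expUtil B v s (F s) (F (1 - s)) = 0 ∧
    expUtil B v (1 - s) (F (1 - s)) (F s) = v (1 - s) - Lval B v ∧
    (F s {0}).toReal = (v (1 - s) - Lval B v) / v (1 - s) ∧
    F s {Lval B v} = 0 ∧
    F (1 - s) {0} = 0 ∧
    F (1 - s) {Lval B v} = 0 :=
  endpoint_masses_case2_general B v hv F hN s h0 hvs
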